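/- arXiv:1010.2701 — 4 statements merged into one kernel-verified Lean document; each statement's English description precedes it below -/
import Mathlib

section
/- There do not exist affine maps μ: D(H) → Prob(Λ) from density operators on a finite-dimensional Hilbert space H (dim ≥ 2) to probability distributions on a finite set Λ, and ξ: E(H) → [0,1]^Λ from effects to functions on Λ with ξ(𝟙)(λ) = 1 for all λ, such that Tr(ρE) = Σ_λ μ(ρ)(λ)·ξ(E)(λ) for all density operators ρ and effects E. (No classical representation of quantum theory exists.) -/
/-!
For a pure state `P`, Born's rule `Tr(P P) = 1` forces `ξ P = 1` on the support of `μ P`, and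
`Tr(P 0) = 0` forces `ξ 0 = 0` there. If two pure states `P = |u⟩⟨u|` and `Q = |w⟩⟨w|` with
`|⟨u, w⟩| < 1` shared a point `l` of their supports, affinity of `ξ` would give
`ξ ((P + Q) / 2) l = 1`. But `(P + Q) / 2 ≤ c 𝟙` with `c = (1 + |⟨u, w⟩|) / 2 < 1` (Cauchy–Schwarz),
so `(P + Q) / 2 = c E + (1 - c) 0` for an effect `E`, whence `ξ ((P + Q) / 2) l ≤ c < 1`.
So distinct pure states have disjoint supports, which the continuum of pure states
`cos t e₀ + sin t e₁`, `0 < t < π`, cannot have in a finite `Λ`.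
-/

open Matrix
open scoped ComplexOrder

/-- A density operator: positive semidefinite with unit trace. -/
def IsDensity {d : ℕ} (ρ : Matrix (Fin d) (Fin d) ℂ) : Prop :=
  ρ.PosSemidef ∧ ρ.trace = 1

/-- An effect: `0 ≤ E ≤ 𝟙`. -/
def IsEffect {d : ℕ} (E : Matrix (Fin d) (Fin d) ℂ) : Prop :=
  E.PosSemidef ∧ (1 - E).PosSemidef

open scoped InnerProductSpace

section WeightedSums

variable {ι : Type*} [Fintype ι] {m y : ι → ℝ} {i : ι}

theorem eq_zero_of_sum_mul_eq_zero (hm : ∀ j, 0 ≤ m j) (hy : ∀ j, 0 ≤ y j)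
    (h : ∑ j, m j * y j = 0) (hi : 0 < m i) : y i = 0 :=
  (mul_eq_zero.mp ((Finset.sum_eq_zero_iff_of_nonneg fun j _ => mul_nonneg (hm j) (hy j)).mp h i
    (Finset.mem_univ i))).resolve_left hi.ne'

theorem eq_one_of_sum_mul_eq_one (hm : ∀ j, 0 ≤ m j) (hm₁ : ∑ j, m j = 1) (hy : ∀ j, y j ≤ 1)
    (h : ∑ j, m j * y j = 1) (hi : 0 < m i) : y i = 1 := by
  have h' : ∑ j, m j * (1 - y j) = 0 := by
    simp only [mul_sub, mul_one, Finset.sum_sub_distrib, hm₁, h, sub_self]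
  linarith [eq_zero_of_sum_mul_eq_zero hm (fun j => sub_nonneg.mpr (hy j)) h' hi]

end WeightedSums

section InnerProductSpace

variable {𝕜 E : Type*} [RCLike 𝕜] [NormedAddCommGroup E] [InnerProductSpace 𝕜 E]

theorem norm_inner_sq_add_norm_inner_sq_le {u w : E} (hu : ‖u‖ = 1) (hw : ‖w‖ = 1) (x : E) :
    ‖⟪u, x⟫_𝕜‖ ^ 2 + ‖⟪w, x⟫_𝕜‖ ^ 2 ≤ (1 + ‖⟪u, w⟫_𝕜‖) * ‖x‖ ^ 2 := by
  set a := ⟪u, x⟫_𝕜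
  set b := ⟪w, x⟫_𝕜
  set S := ‖a‖ ^ 2 + ‖b‖ ^ 2
  -- Cauchy–Schwarz applied to `y = a u + b w`, whose inner product with `x` is `S`
  set y := a • u + b • w
  have hyx : ⟪y, x⟫_𝕜 = (S : 𝕜) := by
    rw [inner_add_left, inner_smul_left, inner_smul_left]
    change (starRingEnd 𝕜) a * a + (starRingEnd 𝕜) b * b = _
    rw [RCLike.conj_mul, RCLike.conj_mul, RCLike.ofReal_add, RCLike.ofReal_pow, RCLike.ofReal_pow]
  have hy : ‖y‖ ^ 2 ≤ (1 + ‖⟪u, w⟫_𝕜‖) * S := by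
    have hcross : RCLike.re ⟪a • u, b • w⟫_𝕜 ≤ ‖a‖ * ‖b‖ * ‖⟪u, w⟫_𝕜‖ := by
      refine (RCLike.re_le_norm _).trans_eq ?_
      rw [inner_smul_left, inner_smul_right, norm_mul, norm_mul, RCLike.norm_conj]
      ring
    have hab : 2 * (‖a‖ * ‖b‖) ≤ S := by nlinarith [sq_nonneg (‖a‖ - ‖b‖)]
    rw [@norm_add_sq 𝕜, norm_smul, norm_smul, hu, hw]
    nlinarith [norm_nonneg ⟪u, w⟫_𝕜]
  have hS : S ≤ ‖y‖ * ‖x‖ := by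
    have := norm_inner_le_norm (𝕜 := 𝕜) y x
    rwa [hyx, RCLike.norm_ofReal, abs_of_nonneg (by positivity)] at this
  have hS₀ : 0 ≤ S := by positivity
  have hSS : S * S ≤ (1 + ‖⟪u, w⟫_𝕜‖) * ‖x‖ ^ 2 * S := calc
    S * S ≤ ‖y‖ ^ 2 * ‖x‖ ^ 2 := by nlinarith
    _ ≤ (1 + ‖⟪u, w⟫_𝕜‖) * S * ‖x‖ ^ 2 := by gcongr
    _ = _ := by ring
  rcases hS₀.eq_or_lt with h | h
  · rw [← h]; positivity
  · exact le_of_mul_le_mul_right hSS h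

theorem inner_cos_smul_add_sin_smul {ι : Type*} {v : ι → E} (hv : Orthonormal 𝕜 v) {i j : ι}
    (hij : i ≠ j) (s t : ℝ) :
    ⟪(Real.cos s : 𝕜) • v i + (Real.sin s : 𝕜) • v j,
      (Real.cos t : 𝕜) • v i + (Real.sin t : 𝕜) • v j⟫_𝕜 = (Real.cos (s - t) : 𝕜) := by
  classical
  have h := orthonormal_iff_ite.mp hv
  simp only [inner_add_left, inner_add_right, inner_smul_left, inner_smul_right, h, hij,
    hij.symm, if_true, if_false, RCLike.conj_ofReal, Real.cos_sub]
  push_cast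
  ring

theorem norm_cos_smul_add_sin_smul {ι : Type*} {v : ι → E} (hv : Orthonormal 𝕜 v) {i j : ι}
    (hij : i ≠ j) (t : ℝ) : ‖(Real.cos t : 𝕜) • v i + (Real.sin t : 𝕜) • v j‖ = 1 := by
  rw [@norm_eq_sqrt_re_inner 𝕜, inner_cos_smul_add_sin_smul hv hij, sub_self, Real.cos_zero,
    RCLike.ofReal_one, RCLike.one_re, Real.sqrt_one]

end InnerProductSpace

namespace Real

theorem abs_cos_sub_lt_one {s t : ℝ} (hs : s ∈ Set.Ioo 0 π) (ht : t ∈ Set.Ioo 0 π)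
    (hst : s ≠ t) : |cos (s - t)| < 1 := by
  refine (abs_cos_le_one _).lt_of_ne fun h => hst ?_
  obtain ⟨k, hk⟩ := abs_cos_eq_one_iff.mp h
  have hk₀ : k = 0 := by
    have hkπ : |(k : ℝ) * π| < π := by
      rw [hk, abs_lt]
      constructor <;> linarith [hs.1, hs.2, ht.1, ht.2]
    rw [abs_mul, abs_of_pos pi_pos, mul_lt_iff_lt_one_left pi_pos] at hkπ
    exact Int.abs_lt_one_iff.mp (by exact_mod_cast hkπ)
  simp only [hk₀, Int.cast_zero, zero_mul] at hk
  linarith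

end Real

section KetBra

variable {n : Type*} [Fintype n]

def ketBra (u : EuclideanSpace ℂ n) : Matrix n n ℂ := vecMulVec u.ofLp (star u.ofLp)

theorem star_dotProduct_self_eq_norm_sq (u : EuclideanSpace ℂ n) :
    star u.ofLp ⬝ᵥ u.ofLp = ((‖u‖ ^ 2 : ℝ) : ℂ) := by
  rw [dotProduct_comm, ← EuclideanSpace.inner_eq_star_dotProduct, inner_self_eq_norm_sq_to_K]
  push_cast; rfl

theorem star_dotProduct_ketBra_mulVec (u : EuclideanSpace ℂ n) (x : n → ℂ) :
    star x ⬝ᵥ (ketBra u *ᵥ x) = ((‖⟪u, WithLp.toLp 2 x⟫_ℂ‖ ^ 2 : ℝ) : ℂ) := by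
  have hc : star u.ofLp ⬝ᵥ x = ⟪u, WithLp.toLp 2 x⟫_ℂ := by
    rw [EuclideanSpace.inner_eq_star_dotProduct, dotProduct_comm]
  rw [ketBra, dotProduct_mulVec, vecMul_vecMulVec, smul_dotProduct, smul_eq_mul, star_dotProduct,
    hc, RCLike.star_def, RCLike.conj_mul]
  push_cast; rfl

theorem posSemidef_ketBra (u : EuclideanSpace ℂ n) : (ketBra u).PosSemidef :=
  posSemidef_vecMulVec_self_star _

theorem ketBra_mul_self {u : EuclideanSpace ℂ n} (hu : ‖u‖ = 1) :
    ketBra u * ketBra u = ketBra u := by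
  rw [ketBra, vecMulVec_mul_vecMulVec, star_dotProduct_self_eq_norm_sq, hu]
  simp

theorem trace_ketBra {u : EuclideanSpace ℂ n} (hu : ‖u‖ = 1) : (ketBra u).trace = 1 := by
  rw [ketBra, trace_vecMulVec, dotProduct_comm, star_dotProduct_self_eq_norm_sq, hu]
  simp

theorem posSemidef_smul_one_sub_ketBra_add [DecidableEq n] {u w : EuclideanSpace ℂ n}
    (hu : ‖u‖ = 1) (hw : ‖w‖ = 1) :
    (((1 + ‖⟪u, w⟫_ℂ‖ : ℝ) : ℂ) • (1 : Matrix n n ℂ) - (ketBra u + ketBra w)).PosSemidef := by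
  refine .of_dotProduct_mulVec_nonneg ?_ fun x => ?_
  · exact (isHermitian_one.smul (Complex.conj_ofReal _)).sub
      ((posSemidef_ketBra u).isHermitian.add (posSemidef_ketBra w).isHermitian)
  · rw [sub_mulVec, add_mulVec, smul_mulVec, one_mulVec, dotProduct_sub, dotProduct_add,
      dotProduct_smul, star_dotProduct_ketBra_mulVec, star_dotProduct_ketBra_mulVec,
      show star x ⬝ᵥ x = _ from star_dotProduct_self_eq_norm_sq (WithLp.toLp 2 x), smul_eq_mul,
      ← Complex.ofReal_mul, ← Complex.ofReal_add, ← Complex.ofReal_sub, Complex.zero_le_real]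
    linarith [norm_inner_sq_add_norm_inner_sq_le (𝕜 := ℂ) hu hw (WithLp.toLp 2 x)]

end KetBra

section Effects

variable {d : ℕ}

theorem isEffect_zero : IsEffect (0 : Matrix (Fin d) (Fin d) ℂ) :=
  ⟨.zero, by simpa using PosSemidef.one⟩

theorem isEffect_of_mul_self_eq {P : Matrix (Fin d) (Fin d) ℂ} (hP : P.PosSemidef)
    (hPP : P * P = P) : IsEffect P := by
  refine ⟨hP, ?_⟩
  have h : 1 - P = (1 - P)ᴴ * (1 - P) := by
    rw [conjTranspose_sub, conjTranspose_one, hP.isHermitian.eq, sub_mul, mul_sub, mul_sub, hPP]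
    simp
  rw [h]
  exact posSemidef_conjTranspose_mul_self _

theorem isEffect_inv_smul {A : Matrix (Fin d) (Fin d) ℂ} (hA : A.PosSemidef) {r : ℝ} (hr : 0 < r)
    (hAr : ((r : ℂ) • 1 - A).PosSemidef) : IsEffect (((r⁻¹ : ℝ) : ℂ) • A) := by
  have hr' : (0 : ℂ) ≤ ((r⁻¹ : ℝ) : ℂ) := Complex.zero_le_real.mpr (inv_nonneg.mpr hr.le)
  refine ⟨hA.smul hr', ?_⟩
  have h : 1 - ((r⁻¹ : ℝ) : ℂ) • A = ((r⁻¹ : ℝ) : ℂ) • ((r : ℂ) • 1 - A) := by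
    rw [smul_sub, smul_smul, ← Complex.ofReal_mul, inv_mul_cancel₀ hr.ne', Complex.ofReal_one,
      one_smul]
  rw [h]
  exact hAr.smul hr'

end Effects

structure IsBornRepresentation {d : ℕ} {Λ : Type} [Fintype Λ]
    (μ ξ : Matrix (Fin d) (Fin d) ℂ → Λ → ℝ) : Prop where
  prob : ∀ ρ, IsDensity ρ → (∀ l, 0 ≤ μ ρ l) ∧ ∑ l, μ ρ l = 1
  mem_Icc : ∀ E, IsEffect E → ∀ l, ξ E l ∈ Set.Icc (0 : ℝ) 1
  affine : ∀ E₁ E₂, IsEffect E₁ → IsEffect E₂ → ∀ t : ℝ, 0 ≤ t → t ≤ 1 →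
    ξ ((t : ℂ) • E₁ + ((1 - t : ℝ) : ℂ) • E₂) = t • ξ E₁ + (1 - t) • ξ E₂
  born : ∀ ρ E, IsDensity ρ → IsEffect E → (ρ * E).trace = ((∑ l, μ ρ l * ξ E l : ℝ) : ℂ)

namespace IsBornRepresentation

variable {d : ℕ} {Λ : Type} [Fintype Λ] {μ ξ : Matrix (Fin d) (Fin d) ℂ → Λ → ℝ}
  {ρ P Q E : Matrix (Fin d) (Fin d) ℂ} {l : Λ}

theorem exists_pos (h : IsBornRepresentation μ ξ) (hρ : IsDensity ρ) : ∃ l, 0 < μ ρ l := by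
  have := (h.prob ρ hρ).2
  simpa using Finset.exists_lt_of_sum_lt (s := Finset.univ) (f := 0) (g := μ ρ) (by simp [this])

theorem apply_zero_eq_zero (h : IsBornRepresentation μ ξ) (hρ : IsDensity ρ) (hl : 0 < μ ρ l) :
    ξ 0 l = 0 := by
  have hsum : ∑ l, μ ρ l * ξ 0 l = 0 := by
    have := h.born ρ 0 hρ isEffect_zero
    rw [mul_zero, trace_zero] at this
    exact_mod_cast this.symm
  exact eq_zero_of_sum_mul_eq_zero (h.prob ρ hρ).1 (fun l => (h.mem_Icc 0 isEffect_zero l).1)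
    hsum hl

theorem apply_eq_one_of_mul_self_eq (h : IsBornRepresentation μ ξ) (hP : IsDensity P)
    (hPP : P * P = P) (hl : 0 < μ P l) : ξ P l = 1 := by
  have hPe := isEffect_of_mul_self_eq hP.1 hPP
  have hsum : ∑ l, μ P l * ξ P l = 1 := by
    have := h.born P P hP hPe
    rw [hPP, hP.2] at this
    exact_mod_cast this.symm
  exact eq_one_of_sum_mul_eq_one (h.prob P hP).1 (h.prob P hP).2 (fun l => (h.mem_Icc P hPe l).2)
    hsum hl

theorem apply_smul_le (h : IsBornRepresentation μ ξ) (hE : IsEffect E) {c : ℝ} (hc₀ : 0 ≤ c)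
    (hc₁ : c ≤ 1) (hξ₀ : ξ 0 l = 0) : ξ ((c : ℂ) • E) l ≤ c := by
  have := congrFun (h.affine E 0 hE isEffect_zero c hc₀ hc₁) l
  simp only [smul_zero, add_zero, Pi.add_apply, Pi.smul_apply, smul_eq_mul, hξ₀, mul_zero] at this
  rw [this]
  exact mul_le_of_le_one_right hc₀ (h.mem_Icc E hE l).2

theorem disjoint_support_of_add_le (h : IsBornRepresentation μ ξ) (hP : IsDensity P)
    (hPP : P * P = P) (hQ : IsDensity Q) (hQQ : Q * Q = Q) {r : ℝ} (hr₁ : 1 ≤ r) (hr₂ : r < 2)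
    (hPQ : ((r : ℂ) • 1 - (P + Q)).PosSemidef) :
    Disjoint (Function.support (μ P)) (Function.support (μ Q)) := by
  refine Set.disjoint_left.mpr fun l hlP hlQ => ?_
  have hlP' : 0 < μ P l := ((h.prob P hP).1 l).lt_of_ne' hlP
  have hlQ' : 0 < μ Q l := ((h.prob Q hQ).1 l).lt_of_ne' hlQ
  have hE := isEffect_inv_smul (hP.1.add hQ.1) (by linarith) hPQ
  have hmid : ((1 / 2 : ℝ) : ℂ) • P + ((1 - 1 / 2 : ℝ) : ℂ) • Q =
      ((r / 2 : ℝ) : ℂ) • ((r⁻¹ : ℝ) : ℂ) • (P + Q) := by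
    rw [smul_smul, ← Complex.ofReal_mul, show r / 2 * r⁻¹ = 1 / 2 by field_simp]
    norm_num [smul_add]
  have hle := h.apply_smul_le hE (c := r / 2) (by linarith) (by linarith)
    (h.apply_zero_eq_zero hP hlP')
  rw [← hmid, h.affine P Q (isEffect_of_mul_self_eq hP.1 hPP) (isEffect_of_mul_self_eq hQ.1 hQQ)
    _ (by norm_num) (by norm_num)] at hle
  simp only [Pi.add_apply, Pi.smul_apply, smul_eq_mul, h.apply_eq_one_of_mul_self_eq hP hPP hlP',
    h.apply_eq_one_of_mul_self_eq hQ hQQ hlQ'] at hle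
  linarith

theorem disjoint_support_ketBra (h : IsBornRepresentation μ ξ) {u w : EuclideanSpace ℂ (Fin d)}
    (hu : ‖u‖ = 1) (hw : ‖w‖ = 1) (huw : ‖⟪u, w⟫_ℂ‖ < 1) :
    Disjoint (Function.support (μ (ketBra u))) (Function.support (μ (ketBra w))) :=
  h.disjoint_support_of_add_le ⟨posSemidef_ketBra u, trace_ketBra hu⟩ (ketBra_mul_self hu)
    ⟨posSemidef_ketBra w, trace_ketBra hw⟩ (ketBra_mul_self hw)
    (by linarith [norm_nonneg ⟪u, w⟫_ℂ]) (by linarith) (posSemidef_smul_one_sub_ketBra_add hu hw)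

end IsBornRepresentation

/-- There is no classical (non-negative probability) representation of quantum theory:
no pair of affine maps taking density operators to probability distributions on a finite
set `Λ` and effects to `[0,1]`-valued functions on `Λ` (with the unit effect mapping to
the constant function 1) can reproduce the Born rule. -/
theorem no_classical_representation (d : ℕ) (hd : 2 ≤ d) (Λ : Type) [Fintype Λ] :
    ¬ ∃ (μ ξ : Matrix (Fin d) (Fin d) ℂ → Λ → ℝ),
      (∀ ρ, IsDensity ρ → (∀ l, 0 ≤ μ ρ l) ∧ ∑ l, μ ρ l = 1) ∧
      (∀ E, IsEffect E → ∀ l, ξ E l ∈ Set.Icc (0 : ℝ) 1) ∧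
      (∀ l, ξ 1 l = 1) ∧
      (∀ ρ₁ ρ₂, IsDensity ρ₁ → IsDensity ρ₂ → ∀ t : ℝ, 0 ≤ t → t ≤ 1 →
        μ ((t : ℂ) • ρ₁ + ((1 - t : ℝ) : ℂ) • ρ₂) = t • μ ρ₁ + (1 - t) • μ ρ₂) ∧
      (∀ E₁ E₂, IsEffect E₁ → IsEffect E₂ → ∀ t : ℝ, 0 ≤ t → t ≤ 1 →
        ξ ((t : ℂ) • E₁ + ((1 - t : ℝ) : ℂ) • E₂) = t • ξ E₁ + (1 - t) • ξ E₂) ∧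
      (∀ ρ E, IsDensity ρ → IsEffect E →
        (ρ * E).trace = ((∑ l, μ ρ l * ξ E l : ℝ) : ℂ)) := by
  rintro ⟨μ, ξ, hμ, hξ, -, -, hξaff, hBorn⟩
  have h : IsBornRepresentation μ ξ := ⟨hμ, hξ, hξaff, hBorn⟩
  have : Nontrivial (Fin d) := Fin.nontrivial_iff_two_le.mpr hd
  obtain ⟨i, j, hij⟩ := exists_pair_ne (Fin d)
  have hv := EuclideanSpace.orthonormal_single (𝕜 := ℂ) (ι := Fin d)
  let u (t : Set.Ioo 0 Real.pi) : EuclideanSpace ℂ (Fin d) :=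
    (Real.cos t : ℂ) • EuclideanSpace.single i 1 + (Real.sin t : ℂ) • EuclideanSpace.single j 1
  have hu (t) : ‖u t‖ = 1 := norm_cos_smul_add_sin_smul hv hij t
  choose l hl using fun t => h.exists_pos ⟨posSemidef_ketBra (u t), trace_ketBra (hu t)⟩
  have : Infinite (Set.Ioo 0 Real.pi) := Set.Ioo.infinite Real.pi_pos
  obtain ⟨s, t, hst, hlst⟩ := Finite.exists_ne_map_eq_of_infinite l
  refine Set.disjoint_left.mp (h.disjoint_support_ketBra (hu s) (hu t) ?_) (hl s).ne'
    (hlst ▸ (hl t).ne')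
  rw [show ⟪u s, u t⟫_ℂ = _ from inner_cos_smul_add_sin_smul hv hij s t, RCLike.norm_ofReal]
  exact Real.abs_cos_sub_lt_one s.2 t.2 (Subtype.coe_injective.ne hst)
end

section
/- If {F(λ)}_{λ∈Λ} is a finite frame for the real Hilbert space of Hermitian operators on C^d and {D(λ)}_{λ∈Λ} is a dual frame to it, then it is impossible that all F(λ) are positive semi-definite and all D(λ) are positive semi-definite simultaneously (for d ≥ 2). -/
/-!
Test the dual-frame identity on a pure state `P = ψψ†` and pair it with `P`: this gives
`1 = ∑ tr(F_λ P) tr(D_λ P)`, an average with weights `tr(F_λ P) ≥ 0` summing to `tr P = 1` of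
numbers `tr(D_λ P) ≤ tr D_λ = 1`. Hence `tr(D_λ P) = 1` for some `λ`, which forces the density
matrix `D_λ` to be `P`. So every pure state occurs among the finitely many `D_λ`, while for
`d ≥ 2` there are infinitely many pure states.
-/

open Matrix
open scoped ComplexOrder

lemma Finset.exists_eq_one_of_sum_mul_eq_sum {ι R : Type*} [CommRing R] [PartialOrder R]
    [IsOrderedRing R] [NoZeroDivisors R] {s : Finset ι} {w g : ι → R}
    (hw : ∀ i ∈ s, 0 ≤ w i) (hg : ∀ i ∈ s, g i ≤ 1)
    (h : ∑ i ∈ s, w i * g i = ∑ i ∈ s, w i) (hne : ∑ i ∈ s, w i ≠ 0) : ∃ i ∈ s, g i = 1 := by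
  obtain ⟨i, hi, hwi⟩ := Finset.exists_ne_zero_of_sum_ne_zero hne
  have hzero : ∑ i ∈ s, w i * (1 - g i) = 0 := by
    simp only [mul_one_sub, Finset.sum_sub_distrib, h, sub_self]
  have hterm := (Finset.sum_eq_zero_iff_of_nonneg fun j hj =>
    mul_nonneg (hw j hj) (sub_nonneg.2 (hg j hj))).1 hzero i hi
  exact ⟨i, hi, (sub_eq_zero.1 ((mul_eq_zero.1 hterm).resolve_left hwi)).symm⟩

lemma Matrix.PosSemidef.mul_eq_zero_of_conjTranspose_mul_mul_eq_zero {n : Type*} [Fintype n]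
    {D Q : Matrix n n ℂ} (hD : D.PosSemidef) (h : Qᴴ * D * Q = 0) : D * Q = 0 := by
  refine mulVec_injective (funext fun x => ?_)
  have hx : star (Q *ᵥ x) ⬝ᵥ D *ᵥ (Q *ᵥ x) = 0 := by
    rw [star_mulVec, ← dotProduct_mulVec, mulVec_mulVec, mulVec_mulVec, h, zero_mulVec,
      dotProduct_zero]
  rw [← mulVec_mulVec, (hD.dotProduct_mulVec_zero_iff _).1 hx, zero_mulVec]

section RankOneProj

variable {n : Type*} [Fintype n] (ψ : n → ℂ)

def rankOneProj : Matrix n n ℂ := vecMulVec ψ (star ψ)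

lemma isHermitian_rankOneProj : (rankOneProj ψ).IsHermitian :=
  (posSemidef_vecMulVec_self_star ψ).isHermitian

lemma trace_mul_rankOneProj (M : Matrix n n ℂ) :
    (M * rankOneProj ψ).trace = star ψ ⬝ᵥ M *ᵥ ψ := by
  rw [rankOneProj, mul_vecMulVec, trace_vecMulVec, dotProduct_comm]

lemma rankOneProj_mul_mul_rankOneProj (M : Matrix n n ℂ) :
    rankOneProj ψ * M * rankOneProj ψ = (star ψ ⬝ᵥ M *ᵥ ψ) • rankOneProj ψ := by
  rw [rankOneProj, vecMulVec_mul, vecMulVec_mul_vecMulVec, ← dotProduct_mulVec, vecMulVec_smul]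

variable {ψ}

lemma isIdempotentElem_rankOneProj (hψ : star ψ ⬝ᵥ ψ = 1) :
    IsIdempotentElem (rankOneProj ψ) := by
  rw [IsIdempotentElem, rankOneProj, vecMulVec_mul_vecMulVec, hψ, one_smul]

lemma trace_rankOneProj (hψ : star ψ ⬝ᵥ ψ = 1) : (rankOneProj ψ).trace = 1 := by
  rw [rankOneProj, trace_vecMulVec, dotProduct_comm, hψ]

variable [DecidableEq n]

lemma trace_conj_one_sub_rankOneProj (hψ : star ψ ⬝ᵥ ψ = 1) (D : Matrix n n ℂ) :
    ((1 - rankOneProj ψ)ᴴ * D * (1 - rankOneProj ψ)).trace =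
      D.trace - (D * rankOneProj ψ).trace := by
  rw [(isHermitian_one.sub (isHermitian_rankOneProj ψ)).eq, trace_mul_cycle,
    (isIdempotentElem_rankOneProj hψ).one_sub.eq, trace_mul_comm, mul_one_sub, trace_sub]

lemma trace_mul_rankOneProj_le_trace (hψ : star ψ ⬝ᵥ ψ = 1) {D : Matrix n n ℂ}
    (hD : D.PosSemidef) : (D * rankOneProj ψ).trace ≤ D.trace :=
  sub_nonneg.1 <|
    trace_conj_one_sub_rankOneProj hψ D ▸ (hD.conjTranspose_mul_mul_same _).trace_nonneg

lemma eq_trace_smul_rankOneProj (hψ : star ψ ⬝ᵥ ψ = 1) {D : Matrix n n ℂ} (hD : D.PosSemidef)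
    (h : (D * rankOneProj ψ).trace = D.trace) : D = D.trace • rankOneProj ψ := by
  have hP := (isHermitian_rankOneProj ψ).eq
  have hconj : (1 - rankOneProj ψ)ᴴ * D * (1 - rankOneProj ψ) = 0 := by
    rw [← (hD.conjTranspose_mul_mul_same _).trace_eq_zero_iff,
      trace_conj_one_sub_rankOneProj hψ, h, sub_self]
  have hDP : D = D * rankOneProj ψ := by
    rw [← sub_eq_zero, ← mul_one_sub]
    exact hD.mul_eq_zero_of_conjTranspose_mul_mul_eq_zero hconj
  have hPD : D = rankOneProj ψ * D := by
    conv_lhs => rw [← hD.isHermitian.eq, hDP, conjTranspose_mul, hP, hD.isHermitian.eq]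
  calc D = rankOneProj ψ * D * rankOneProj ψ := by rw [← hPD, ← hDP]
    _ = D.trace • rankOneProj ψ := by
      rw [rankOneProj_mul_mul_rankOneProj, ← trace_mul_rankOneProj, h]

end RankOneProj

theorem exists_eq_rankOneProj {n Λ : Type*} [Fintype n] [DecidableEq n] [Fintype Λ]
    {F D : Λ → Matrix n n ℂ} (hF : ∀ l, (F l).PosSemidef) (hD : ∀ l, (D l).PosSemidef)
    (hsum : ∑ l, F l = 1) (htr : ∀ l, (D l).trace = 1) {ψ : n → ℂ} (hψ : star ψ ⬝ᵥ ψ = 1)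
    (hdual : rankOneProj ψ = ∑ l, (F l * rankOneProj ψ).trace • D l) :
    ∃ l, D l = rankOneProj ψ := by
  have hw : ∀ l, 0 ≤ (F l * rankOneProj ψ).trace := fun l =>
    trace_mul_rankOneProj ψ (F l) ▸ (hF l).dotProduct_mulVec_nonneg ψ
  have hw_sum : ∑ l, (F l * rankOneProj ψ).trace = 1 := by
    rw [← trace_sum, ← Finset.sum_mul, hsum, Matrix.one_mul, trace_rankOneProj hψ]
  have hwg_sum : ∑ l, (F l * rankOneProj ψ).trace * (D l * rankOneProj ψ).trace = 1 := by
    calc _ = ((∑ l, (F l * rankOneProj ψ).trace • D l) * rankOneProj ψ).trace := by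
          simp only [Finset.sum_mul, trace_sum, smul_mul_assoc, trace_smul, smul_eq_mul]
      _ = 1 := by rw [← hdual, (isIdempotentElem_rankOneProj hψ).eq, trace_rankOneProj hψ]
  obtain ⟨l, -, hl⟩ := Finset.exists_eq_one_of_sum_mul_eq_sum (fun l _ => hw l)
    (fun l _ => htr l ▸ trace_mul_rankOneProj_le_trace hψ (hD l)) (hwg_sum.trans hw_sum.symm)
    (hw_sum ▸ one_ne_zero)
  refine ⟨l, ?_⟩
  rw [eq_trace_smul_rankOneProj hψ (hD l) (hl.trans (htr l).symm), htr l, one_smul]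

lemma infinite_range_rankOneProj {n : Type*} [Fintype n] [DecidableEq n] [Nontrivial n] :
    (Set.range fun ψ : {ψ : n → ℂ // star ψ ⬝ᵥ ψ = 1} => rankOneProj ψ.1).Infinite := by
  obtain ⟨i, j, hij⟩ := exists_pair_ne n
  refine fun hfin =>
    Set.Icc_infinite (zero_lt_one' ℝ) ((hfin.image fun P => (P j j).re).subset ?_)
  rintro t ⟨ht0, ht1⟩
  let ψ : n → ℂ := Pi.single i (√(1 - t) : ℂ) + Pi.single j (√t : ℂ)
  have hψ : star ψ ⬝ᵥ ψ = 1 := by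
    simp [ψ, hij, hij.symm, Pi.star_single, ← Complex.ofReal_mul, ht0, ht1]
  refine ⟨rankOneProj ψ, ⟨⟨ψ, hψ⟩, rfl⟩, ?_⟩
  simp [rankOneProj, vecMulVec_apply, ψ, hij.symm, ← Complex.ofReal_mul, ht0]

theorem no_positive_frame_and_dual_general (d : ℕ) (hd : 2 ≤ d) (Λ : Type) [Fintype Λ]
    (F D : Λ → Matrix (Fin d) (Fin d) ℂ)
    (hdual : ∀ A : Matrix (Fin d) (Fin d) ℂ, A.IsHermitian →
      A = ∑ l, (F l * A).trace • D l)
    (hsum : ∑ l, F l = 1) (htr : ∀ l, (D l).trace = 1) :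
    ¬ ((∀ l, (F l).PosSemidef) ∧ (∀ l, (D l).PosSemidef)) := by
  rintro ⟨hF, hD⟩
  have : Nontrivial (Fin d) := Fin.nontrivial_iff_two_le.2 hd
  refine infinite_range_rankOneProj.mono ?_ (Set.finite_range D)
  rintro _ ⟨⟨ψ, hψ⟩, rfl⟩
  exact exists_eq_rankOneProj hF hD hsum htr hψ (hdual _ (isHermitian_rankOneProj ψ))

/-- If `{F λ}` is a frame for the Hermitian matrices (a spanning family of Hermitian
operators summing to the identity) and `{D λ}` is a dual frame to it (with unit-trace
elements), then for `d ≥ 2` it is impossible that all `F λ` and all `D λ` are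
simultaneously positive semidefinite. -/
theorem no_positive_frame_and_dual (d : ℕ) (hd : 2 ≤ d) (Λ : Type) [Fintype Λ]
    (F D : Λ → Matrix (Fin d) (Fin d) ℂ)
    (hFH : ∀ l, (F l).IsHermitian) (hDH : ∀ l, (D l).IsHermitian)
    (hspan : ∀ A : Matrix (Fin d) (Fin d) ℂ, A.IsHermitian →
      ∃ c : Λ → ℝ, A = ∑ l, (c l : ℂ) • F l)
    (hdual : ∀ A : Matrix (Fin d) (Fin d) ℂ, A.IsHermitian →
      A = ∑ l, (F l * A).trace • D l)
    (hsum : ∑ l, F l = 1) (htr : ∀ l, (D l).trace = 1) :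
    ¬ ((∀ l, (F l).PosSemidef) ∧ (∀ l, (D l).PosSemidef)) :=
  no_positive_frame_and_dual_general d hd Λ F D hdual hsum htr
end

section
/- The number of mutually unbiased bases in C^d is at most d + 1. -/
/-!
Send each basis vector `e` to the rank-one projector `|e⟩⟨e|`, viewed as a vector of the
`d²`-dimensional space of matrices with the Hilbert–Schmidt inner product `tr (Aᴴ B)`.
The projectors of one basis are orthonormal, projectors from different bases have inner product
`1 / d`, and every projector has inner product `1` with the identity. Drop one vector `e_{n,k₀}`
from every basis: then `P_{n,j} - P_{n,k₀}` is orthogonal to the identity and to every remaining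
projector except `P_{n,j}`, so the `m (d - 1)` remaining projectors together with the identity
are linearly independent, and `m (d - 1) + 1 ≤ d²`.
-/

open Matrix

open scoped InnerProductSpace

section DualFamily

variable {𝕜 E ι : Type*} [RCLike 𝕜] [NormedAddCommGroup E] [InnerProductSpace 𝕜 E]
  [Fintype ι] [DecidableEq ι] {v w : ι → E}

lemma inner_sum_smul_of_inner_eq_ite (hvw : ∀ i j, ⟪w i, v j⟫_𝕜 = if i = j then 1 else 0)
    (g : ι → 𝕜) (i : ι) : ⟪w i, ∑ j, g j • v j⟫_𝕜 = g i := by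
  simp [inner_sum, inner_smul_right, hvw]

lemma linearIndependent_option_of_inner_eq_ite {z : E}
    (hvw : ∀ i j, ⟪w i, v j⟫_𝕜 = if i = j then 1 else 0) (hwz : ∀ i, ⟪w i, z⟫_𝕜 = 0)
    (hz : z ≠ 0) : LinearIndependent 𝕜 (fun o => Option.casesOn' o z v) := by
  refine LinearIndependent.option ?_ ?_
  · rw [Fintype.linearIndependent_iff]
    intro g hg i
    rw [← inner_sum_smul_of_inner_eq_ite hvw g i, hg, inner_zero_right]
  · rw [Submodule.mem_span_range_iff_exists_fun]
    rintro ⟨g, rfl⟩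
    have hg : ∀ i, g i = 0 := fun i => by
      rw [← inner_sum_smul_of_inner_eq_ite hvw g i, hwz]
    simp [hg] at hz

end DualFamily

theorem card_mul_card_sub_one_add_one_le_finrank {𝕜 E ι κ : Type*} [RCLike 𝕜]
    [NormedAddCommGroup E] [InnerProductSpace 𝕜 E] [FiniteDimensional 𝕜 E]
    [Fintype ι] [DecidableEq ι] [Fintype κ] [DecidableEq κ] [Nonempty κ]
    (P : ι → κ → E) (z : E) {a c : 𝕜}
    (hP : ∀ n n' j k, ⟪P n j, P n' k⟫_𝕜 = if n = n' then (if j = k then 1 else 0) else c)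
    (hPz : ∀ n j, ⟪P n j, z⟫_𝕜 = a) (hz : z ≠ 0) :
    Fintype.card ι * (Fintype.card κ - 1) + 1 ≤ Module.finrank 𝕜 E := by
  obtain ⟨k₀⟩ := ‹Nonempty κ›
  have hvw : ∀ p q : ι × {k // k ≠ k₀},
      ⟪P p.1 p.2 - P p.1 k₀, P q.1 q.2⟫_𝕜 = if p = q then 1 else 0 := by
    rintro ⟨n, j, _⟩ ⟨n', k, hk⟩
    rw [inner_sub_left, hP, hP]
    by_cases hn : n = n'
    · simp [hn, Ne.symm hk]
    · simp [hn]
  have hwz : ∀ p : ι × {k // k ≠ k₀}, ⟪P p.1 p.2 - P p.1 k₀, z⟫_𝕜 = 0 := fun p => by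
    rw [inner_sub_left, hPz, hPz, sub_self]
  simpa [Fintype.card_subtype_compl] using
    (linearIndependent_option_of_inner_eq_ite hvw hwz hz).fintype_card_le_finrank

section HilbertSchmidt

variable {𝕜 ι : Type*} [RCLike 𝕜]

def hsVec (A : Matrix ι ι 𝕜) : EuclideanSpace 𝕜 (ι × ι) := WithLp.toLp 2 fun p => A p.1 p.2

lemma hsVec_one_ne_zero [DecidableEq ι] [Nonempty ι] : hsVec (1 : Matrix ι ι 𝕜) ≠ 0 := by
  obtain ⟨i⟩ := ‹Nonempty ι›
  intro h
  simpa [hsVec] using congrArg (fun x : EuclideanSpace 𝕜 (ι × ι) => x (i, i)) h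

variable [Fintype ι]

lemma inner_hsVec (A B : Matrix ι ι 𝕜) : ⟪hsVec A, hsVec B⟫_𝕜 = trace (Aᴴ * B) := by
  simp only [hsVec, EuclideanSpace.inner_toLp_toLp, dotProduct, trace, diag, mul_apply,
    conjTranspose_apply, Pi.star_apply, Fintype.sum_prod_type]
  rw [Finset.sum_comm]
  simp_rw [mul_comm]

lemma inner_hsVec_vecMulVec (e f : ι → 𝕜) :
    ⟪hsVec (vecMulVec e (star e)), hsVec (vecMulVec f (star f))⟫_𝕜 =
      ((‖star e ⬝ᵥ f‖ ^ 2 : ℝ) : 𝕜) := by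
  have h : e ⬝ᵥ star f = star (star e ⬝ᵥ f) := by
    rw [star_dotProduct, star_star, dotProduct_comm]
  rw [inner_hsVec, conjTranspose_vecMulVec, star_star, vecMulVec_mul_vecMulVec, trace_vecMulVec,
    dotProduct_smul, smul_eq_mul, h, RCLike.star_def, RCLike.mul_conj]
  norm_cast

lemma inner_hsVec_vecMulVec_one [DecidableEq ι] (e : ι → 𝕜) :
    ⟪hsVec (vecMulVec e (star e)), hsVec 1⟫_𝕜 = star e ⬝ᵥ e := by
  rw [inner_hsVec, Matrix.mul_one, conjTranspose_vecMulVec, star_star, trace_vecMulVec,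
    dotProduct_comm]

end HilbertSchmidt

/-- The number of pairwise mutually unbiased orthonormal bases of `ℂ^d` is at most
`d + 1`. -/
theorem mub_card_le (d m : ℕ) (hd : 2 ≤ d)
    (B : Fin m → Fin d → (Fin d → ℂ))
    (horth : ∀ n k k', ∑ i, star (B n k i) * B n k' i =
      if k = k' then (1 : ℂ) else 0)
    (hunbiased : ∀ n n', n ≠ n' → ∀ k j,
      (‖∑ i, star (B n k i) * B n' j i‖) ^ 2 = 1 / (d : ℝ)) :
    m ≤ d + 1 := by
  have : Nonempty (Fin d) := ⟨⟨0, by omega⟩⟩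
  have hdot : ∀ n j k, star (B n j) ⬝ᵥ B n k = if j = k then 1 else 0 := horth
  let P n k := hsVec (vecMulVec (B n k) (star (B n k)))
  have hP : ∀ n n' j k, ⟪P n j, P n' k⟫_ℂ =
      if n = n' then (if j = k then 1 else 0) else ((1 / d : ℝ) : ℂ) := by
    intro n n' j k
    rw [inner_hsVec_vecMulVec]
    split_ifs with hn hjk
    · rw [← hn, hdot, if_pos hjk]
      simp
    · rw [← hn, hdot, if_neg hjk]
      simp
    · exact congrArg _ (hunbiased n n' hn j k)
  have hPz : ∀ n j, ⟪P n j, hsVec 1⟫_ℂ = 1 := fun n j => by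
    rw [inner_hsVec_vecMulVec_one, hdot, if_pos rfl]
  have hcard := card_mul_card_sub_one_add_one_le_finrank P _ hP hPz hsVec_one_ne_zero
  simp only [Fintype.card_fin, finrank_euclideanSpace, Fintype.card_prod] at hcard
  obtain ⟨d', rfl⟩ : ∃ d', d = d' + 1 := ⟨d - 1, by omega⟩
  simp only [Nat.add_sub_cancel] at hcard
  nlinarith
end

section
/- Let {ψ_k^n} (n = 0,…,d; k = 0,…,d−1) be d+1 mutually unbiased bases of C^d and define probability tables μ(n,k) = Tr(ρ P(n,k)) with P(n,k) = |ψ_k^n⟩⟨ψ_k^n|. Then for any two density operators ρ, ρ' with tables μ, μ', the transition probability satisfies Tr(ρρ') = Σ_{n=0}^{d} Σ_{k=0}^{d−1} μ(n,k)·μ'(n,k) − 1. -/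
/-!
The `(d+1)d` projectors `P(n,k)` of a complete set of mutually unbiased bases form a
2-design: `∑ P(n,k) ⊗ P(n,k) = 1 + F`, where `F` is the swap operator on `ℂ^d ⊗ ℂ^d`.
Pairing both sides with `ρ ⊗ ρ'` gives `∑ μ(n,k) μ'(n,k) = Tr ρ Tr ρ' + Tr(ρ ρ')`, since
`Tr((A ⊗ B) F) = Tr(A B)`.

The 2-design identity is a frame-potential computation: for `K = ∑ P ⊗ P`, the squared
Hilbert–Schmidt norm `Tr((K - 1 - F)²) = Tr K² - 2 Tr(K (1 + F)) + Tr (1 + F)²` only involves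
the overlaps `Tr(P P') = |⟨ψ', ψ⟩|²`, and mutual unbiasedness fixes them so that it vanishes.
-/

open Matrix
open scoped ComplexOrder

open scoped Kronecker

theorem Equiv.prodComm_mul_self (n : Type*) :
    (Equiv.prodComm n n : Equiv.Perm (n × n)) * Equiv.prodComm n n = 1 :=
  Equiv.ext fun _ => rfl

namespace Matrix

section RankOne

variable {𝕜 n : Type*} [RCLike 𝕜] [Fintype n]

theorem trace_vecMulVec_star_mul_vecMulVec_star (φ χ : n → 𝕜) :
    trace (vecMulVec φ (star φ) * vecMulVec χ (star χ)) = (‖star χ ⬝ᵥ φ‖ ^ 2 : ℝ) := by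
  rw [vecMulVec_mul_vecMulVec, trace_vecMulVec, dotProduct_smul, smul_eq_mul, star_dotProduct,
    dotProduct_comm φ, RCLike.ofReal_pow, ← RCLike.conj_mul, RCLike.star_def]

theorem dotProduct_star_self_eq_one_of_norm_sq {φ : n → 𝕜} (h : ‖star φ ⬝ᵥ φ‖ ^ 2 = 1) :
    star φ ⬝ᵥ φ = 1 := by
  obtain ⟨x, hx, hφ⟩ := RCLike.nonneg_iff_exists_ofReal.1 (dotProduct_star_self_nonneg φ)
  rw [← hφ, RCLike.norm_ofReal, abs_of_nonneg hx, pow_eq_one_iff_of_nonneg hx two_ne_zero] at h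
  rw [← hφ, h, RCLike.ofReal_one]

end RankOne

theorem trace_kronecker_mul_kronecker {l m n p R : Type*} [Fintype l] [Fintype m] [Fintype n]
    [Fintype p] [CommSemiring R] (A : Matrix m l R) (B : Matrix n p R) (C : Matrix l m R)
    (D : Matrix p n R) :
    trace ((A ⊗ₖ B) * (C ⊗ₖ D)) = trace (A * C) * trace (B * D) := by
  rw [← mul_kronecker_mul, trace_kronecker]

section Swap

variable {n : Type*} [DecidableEq n]

abbrev swapMatrix (n R : Type*) [DecidableEq n] [Zero R] [One R] : Matrix (n × n) (n × n) R :=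
  Equiv.Perm.permMatrix R (Equiv.prodComm n n)

theorem conjTranspose_swapMatrix {R : Type*} [NonAssocSemiring R] [StarRing R] :
    (swapMatrix n R)ᴴ = swapMatrix n R := by
  rw [conjTranspose_permMatrix, inv_eq_of_mul_eq_one_right (Equiv.prodComm_mul_self n)]

variable [Fintype n] {R : Type*} [CommRing R]

theorem swapMatrix_mul_self : swapMatrix n R * swapMatrix n R = 1 := by
  rw [← permMatrix_mul, Equiv.prodComm_mul_self, permMatrix_one]

theorem trace_kronecker_mul_swapMatrix (A B : Matrix n n R) :
    trace ((A ⊗ₖ B) * swapMatrix n R) = trace (A * B) := by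
  rw [PEquiv.mul_toMatrix_toPEquiv]
  simp [trace, mul_apply, Fintype.sum_prod_type]

theorem trace_swapMatrix : trace (swapMatrix n R) = Fintype.card n := by
  simpa using trace_kronecker_mul_swapMatrix (1 : Matrix n n R) 1

theorem trace_one_add_swapMatrix_mul_self :
    trace ((1 + swapMatrix n R) * (1 + swapMatrix n R)) =
      2 * (Fintype.card n : R) * (Fintype.card n + 1) := by
  rw [add_mul, mul_add, mul_add, swapMatrix_mul_self]
  simp only [trace_add, mul_one, one_mul, trace_one, trace_swapMatrix, Fintype.card_prod]
  push_cast
  ring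

theorem sum_trace_mul_trace_mul_of_sum_kronecker_self {ι : Type*} [Fintype ι]
    {P : ι → Matrix n n R} (hP : ∑ p, P p ⊗ₖ P p = 1 + swapMatrix n R) (A B : Matrix n n R) :
    ∑ p, trace (A * P p) * trace (B * P p) = trace A * trace B + trace (A * B) := by
  simp_rw [← trace_kronecker_mul_kronecker]
  rw [← trace_sum, ← Finset.mul_sum, hP, mul_add, mul_one, trace_add, trace_kronecker,
    trace_kronecker_mul_swapMatrix]

end Swap

theorem sum_kronecker_self_eq_one_add_swapMatrix {𝕜 n ι : Type*} [RCLike 𝕜] [Fintype n]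
    [DecidableEq n] [Fintype ι] (P : ι → Matrix n n 𝕜)
    (hP : ∀ p, (P p).IsHermitian) (htr : ∀ p, trace (P p) = 1)
    (hpure : ∀ p, trace (P p * P p) = 1)
    (hcard : (Fintype.card ι : 𝕜) = Fintype.card n * (Fintype.card n + 1))
    (hpot : ∑ p, ∑ q, trace (P p * P q) ^ 2 = 2 * Fintype.card n * (Fintype.card n + 1)) :
    ∑ p, P p ⊗ₖ P p = 1 + swapMatrix n 𝕜 := by
  set K := ∑ p, P p ⊗ₖ P p
  set G := 1 + swapMatrix n 𝕜
  have hK : Kᴴ = K := by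
    simp only [K, conjTranspose_sum, conjTranspose_kronecker, (hP _).eq]
  have hG : Gᴴ = G := by
    simp only [G, conjTranspose_add, conjTranspose_one, conjTranspose_swapMatrix]
  have hKK : trace (K * K) = 2 * Fintype.card n * (Fintype.card n + 1) := by
    simp_rw [K, Finset.sum_mul_sum, trace_sum, trace_kronecker_mul_kronecker, ← sq]
    exact hpot
  have hKG : trace (K * G) = 2 * Fintype.card ι := by
    simp only [K, G, mul_add, mul_one, Finset.sum_mul, trace_add, trace_sum, trace_kronecker,
      trace_kronecker_mul_swapMatrix, htr, hpure, Finset.sum_const, Finset.card_univ,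
      nsmul_eq_mul]
    ring
  have hnorm : trace ((K - G) * (K - G)ᴴ) = 0 := by
    rw [conjTranspose_sub, hK, hG, sub_mul, mul_sub, mul_sub, trace_sub, trace_sub, trace_sub,
      trace_mul_comm G K, hKK, hKG, trace_one_add_swapMatrix_mul_self, hcard]
    ring
  exact sub_eq_zero.1 (trace_mul_conjTranspose_self_eq_zero_iff.1 hnorm)

end Matrix

def IsMutuallyUnbiased {𝕜 ι : Type*} [RCLike 𝕜] [DecidableEq ι] {d : ℕ}
    (ψ : ι → Fin d → Fin d → 𝕜) : Prop :=
  ∀ n n' k k', ‖star (ψ n' k') ⬝ᵥ ψ n k‖ ^ 2 =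
    (if k = k' then 1 else 0) * (if n = n' then 1 else 0) +
      (1 / (d : ℝ)) * (1 - (if n = n' then 1 else 0))

theorem sum_sq_mutuallyUnbiased_overlap (d : ℕ) :
    ∑ n : Fin (d + 1), ∑ k : Fin d, ∑ n', ∑ k',
      ((if k = k' then 1 else 0) * (if n = n' then 1 else 0) +
        (1 / (d : ℝ)) * (1 - (if n = n' then 1 else 0))) ^ 2 = 2 * (d : ℝ) * (d + 1) := by
  have hrow : ∀ (n : Fin (d + 1)) (k : Fin d), ∑ n', ∑ k',
      ((if k = k' then 1 else 0) * (if n = n' then 1 else 0) +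
        (1 / (d : ℝ)) * (1 - (if n = n' then 1 else 0))) ^ 2 = 2 := by
    intro n k
    have hd : (d : ℝ) ≠ 0 := Nat.cast_ne_zero.2 (Fin.pos k).ne'
    have hoff : ∀ n' ∈ Finset.univ.erase n, ∑ k' : Fin d,
        ((if k = k' then 1 else 0) * (if n = n' then 1 else 0) +
          (1 / (d : ℝ)) * (1 - (if n = n' then 1 else 0))) ^ 2 = 1 / (d : ℝ) := by
      intro n' hn'
      simp only [(Finset.ne_of_mem_erase hn').symm, ↓reduceIte, mul_zero, one_div, sub_zero,
        mul_one, zero_add, inv_pow, Finset.sum_const, Finset.card_univ, Fintype.card_fin,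
        nsmul_eq_mul]
      field_simp
    rw [← Finset.add_sum_erase _ _ (Finset.mem_univ n), Finset.sum_congr rfl hoff]
    simp only [↓reduceIte, mul_one, one_div, sub_self, mul_zero, add_zero, ite_pow, one_pow,
      ne_eq, OfNat.ofNat_ne_zero, not_false_eq_true, zero_pow, Finset.sum_ite_eq,
      Finset.mem_univ, Finset.sum_const, Finset.card_erase_of_mem, Finset.card_univ,
      Fintype.card_fin, add_tsub_cancel_right, nsmul_eq_mul]
    field_simp
    ring
  simp_rw [hrow]
  simp only [Finset.sum_const, Finset.card_univ, Fintype.card_fin, nsmul_eq_mul, Nat.cast_add,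
    Nat.cast_one]
  ring

theorem IsMutuallyUnbiased.sum_kronecker_self {𝕜 : Type*} [RCLike 𝕜] {d : ℕ}
    {ψ : Fin (d + 1) → Fin d → Fin d → 𝕜} (hψ : IsMutuallyUnbiased ψ) :
    ∑ p : Fin (d + 1) × Fin d,
      vecMulVec (ψ p.1 p.2) (star (ψ p.1 p.2)) ⊗ₖ vecMulVec (ψ p.1 p.2) (star (ψ p.1 p.2)) =
      1 + swapMatrix (Fin d) 𝕜 := by
  have hoverlap : ∀ p q : Fin (d + 1) × Fin d,
      trace (vecMulVec (ψ p.1 p.2) (star (ψ p.1 p.2)) *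
        vecMulVec (ψ q.1 q.2) (star (ψ q.1 q.2))) =
      (((if p.2 = q.2 then 1 else 0) * (if p.1 = q.1 then 1 else 0) +
        (1 / (d : ℝ)) * (1 - (if p.1 = q.1 then 1 else 0)) : ℝ) : 𝕜) := fun p q => by
    rw [trace_vecMulVec_star_mul_vecMulVec_star, hψ]
  have hpure : ∀ p : Fin (d + 1) × Fin d, trace (vecMulVec (ψ p.1 p.2) (star (ψ p.1 p.2)) *
      vecMulVec (ψ p.1 p.2) (star (ψ p.1 p.2))) = 1 := fun p => by
    simp [hoverlap]
  refine sum_kronecker_self_eq_one_add_swapMatrix _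
    (fun p => (posSemidef_vecMulVec_self_star _).isHermitian) (fun p => ?_) hpure ?_ ?_
  · rw [trace_vecMulVec, dotProduct_comm]
    exact dotProduct_star_self_eq_one_of_norm_sq (by simpa using hψ p.1 p.1 p.2 p.2)
  · simp [mul_comm]
  · simp_rw [hoverlap, Fintype.sum_prod_type, Fintype.card_fin]
    exact_mod_cast sum_sq_mutuallyUnbiased_overlap d

theorem mub_transition_probability_general (d : ℕ)
    (ψ : Fin (d + 1) → Fin d → (Fin d → ℂ))
    (hmub : ∀ n n' k k', (‖∑ i, star (ψ n' k' i) * ψ n k i‖) ^ 2 =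
      (if k = k' then 1 else 0) * (if n = n' then 1 else 0) +
        (1 / (d : ℝ)) * (1 - (if n = n' then 1 else 0)))
    (P : Fin (d + 1) → Fin d → Matrix (Fin d) (Fin d) ℂ)
    (hP : ∀ n k, P n k = vecMulVec (ψ n k) (star (ψ n k)))
    (ρ ρ' : Matrix (Fin d) (Fin d) ℂ) (hρ : IsDensity ρ) (hρ' : IsDensity ρ') :
    (ρ * ρ').trace =
      (∑ n, ∑ k, (ρ * P n k).trace * (ρ' * P n k).trace) - 1 := by
  have hdesign := IsMutuallyUnbiased.sum_kronecker_self (ψ := ψ) hmub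
  simp_rw [← hP] at hdesign
  rw [← Fintype.sum_prod_type' (f := fun n k => (ρ * P n k).trace * (ρ' * P n k).trace),
    sum_trace_mul_trace_mul_of_sum_kronecker_self hdesign, hρ.2, hρ'.2]
  ring

/-- Wootters' probability-table transition formula: for `d+1` mutually unbiased bases
with projectors `P(n,k)` and probability tables `μ(n,k) = Tr(ρ P(n,k))`,
`μ'(n,k) = Tr(ρ' P(n,k))`, the transition probability satisfies
`Tr(ρ ρ') = ∑_{n,k} μ(n,k) μ'(n,k) − 1`. -/
theorem mub_transition_probability (d : ℕ) (hd : 1 ≤ d)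
    (ψ : Fin (d + 1) → Fin d → (Fin d → ℂ))
    (hmub : ∀ n n' k k', (‖∑ i, star (ψ n' k' i) * ψ n k i‖) ^ 2 =
      (if k = k' then 1 else 0) * (if n = n' then 1 else 0) +
        (1 / (d : ℝ)) * (1 - (if n = n' then 1 else 0)))
    (P : Fin (d + 1) → Fin d → Matrix (Fin d) (Fin d) ℂ)
    (hP : ∀ n k, P n k = vecMulVec (ψ n k) (star (ψ n k)))
    (ρ ρ' : Matrix (Fin d) (Fin d) ℂ) (hρ : IsDensity ρ) (hρ' : IsDensity ρ') :
    (ρ * ρ').trace =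
      (∑ n, ∑ k, (ρ * P n k).trace * (ρ' * P n k).trace) - 1 :=
  mub_transition_probability_general d ψ hmub P hP ρ ρ' hρ hρ'
end
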